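/- arXiv:1511.03723 — 3 statements merged into one kernel-verified Lean document; each statement's English description precedes it below -/
import Mathlib

section
/- Let V be a complex Hilbert space and let B₀, B₁ be bounded Hermitian coercive sesquilinear forms on V with B₁[u,u] ≤ B₀[u,u] for all u ∈ V. Let G₀, G₁ : V⋆ → V be the corresponding Lax–Milgram solution operators. Then f(G₁f) ≥ f(G₀f) for every f ∈ V⋆ (both sides being real numbers). -/
open scoped ComplexConjugate

/-!
With `u = G₀ f` and `v = G₁ f` the defining identities give `f u = B₀[u,u] = B₁[v,u]` and
`f v = B₁[v,v]`. Positivity of `B₁[v - u, v - u]` yields `2 Re B₁[v,u] ≤ B₁[v,v] + B₁[u,u]`,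
and `B₁[u,u] ≤ B₀[u,u]` turns this into `2 f u ≤ f v + f u`.
-/

section HermitianForm

variable {V : Type*} {B : V → V → ℂ}

theorem im_apply_self_eq_zero_of_hermitian (hherm : ∀ u v, B u v = conj (B v u)) (u : V) :
    (B u u).im = 0 := by
  have h := congrArg Complex.im (hherm u u)
  rw [Complex.conj_im] at h
  linarith

variable [AddCommGroup V]

theorem apply_sub_left_of_add_left (hadd : ∀ u v w, B (u + v) w = B u w + B v w)
    (u v w : V) : B (u - v) w = B u w - B v w :=
  map_sub (AddMonoidHom.mk' (fun x => B x w) fun x y => hadd x y w) u v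

theorem apply_sub_right_of_hermitian (hadd : ∀ u v w, B (u + v) w = B u w + B v w)
    (hherm : ∀ u v, B u v = conj (B v u)) (u v w : V) : B w (u - v) = B w u - B w v := by
  rw [hherm, apply_sub_left_of_add_left hadd, map_sub, ← hherm, ← hherm]

theorem re_apply_sub_self (hadd : ∀ u v w, B (u + v) w = B u w + B v w)
    (hherm : ∀ u v, B u v = conj (B v u)) (u v : V) :
    (B (u - v) (u - v)).re = (B u u).re - 2 * (B u v).re + (B v v).re := by
  have hsymm : (B v u).re = (B u v).re := by rw [hherm, Complex.conj_re]
  rw [apply_sub_left_of_add_left hadd, apply_sub_right_of_hermitian hadd hherm,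
    apply_sub_right_of_hermitian hadd hherm]
  simp only [Complex.sub_re]
  linarith

theorem two_mul_re_apply_le_re_apply_self_add (hadd : ∀ u v w, B (u + v) w = B u w + B v w)
    (hherm : ∀ u v, B u v = conj (B v u)) (hnonneg : ∀ u, 0 ≤ (B u u).re) (u v : V) :
    2 * (B u v).re ≤ (B u u).re + (B v v).re := by
  have hdiff := hnonneg (u - v)
  rw [re_apply_sub_self hadd hherm] at hdiff
  linarith

end HermitianForm

theorem lax_milgram_pairing_monotone_general
    {V : Type*} [NormedAddCommGroup V] [InnerProductSpace ℂ V]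
    (B₀ B₁ : V → V → ℂ)
    (hB₀_herm : ∀ u v : V, B₀ u v = conj (B₀ v u))
    (hB₁_add : ∀ u v w : V, B₁ (u + v) w = B₁ u w + B₁ v w)
    (hB₁_herm : ∀ u v : V, B₁ u v = conj (B₁ v u))
    (hB₁_coer : ∃ m : ℝ, 0 < m ∧ ∀ u : V, m * ‖u‖ ^ 2 ≤ (B₁ u u).re)
    (hle : ∀ u : V, (B₁ u u).re ≤ (B₀ u u).re)
    (G₀ G₁ : (V →L⋆[ℂ] ℂ) →L[ℂ] V)
    (hG₀ : ∀ (f : V →L⋆[ℂ] ℂ) (φ : V), B₀ (G₀ f) φ = f φ)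
    (hG₁ : ∀ (f : V →L⋆[ℂ] ℂ) (φ : V), B₁ (G₁ f) φ = f φ) :
    ∀ f : V →L⋆[ℂ] ℂ,
      (f (G₀ f)).im = 0 ∧ (f (G₁ f)).im = 0 ∧ (f (G₀ f)).re ≤ (f (G₁ f)).re := by
  intro f
  obtain ⟨m, hm, hcoer⟩ := hB₁_coer
  have hnonneg : ∀ u, 0 ≤ (B₁ u u).re := fun u =>
    (mul_nonneg hm.le (sq_nonneg ‖u‖)).trans (hcoer u)
  rw [← hG₀ f, ← hG₁ f]
  refine ⟨im_apply_self_eq_zero_of_hermitian hB₀_herm _,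
    im_apply_self_eq_zero_of_hermitian hB₁_herm _, ?_⟩
  have hcross := two_mul_re_apply_le_re_apply_self_add hB₁_add hB₁_herm hnonneg (G₁ f) (G₀ f)
  rw [hG₁ f, ← hG₀ f] at hcross
  linarith [hle (G₀ f)]

/-- Abstract Lemma 7: if `B₁ ≤ B₀` on the diagonal, then the corresponding Lax–Milgram
solution operators satisfy `f(G₁f) ≥ f(G₀f)` for every antilinear functional `f`
(both sides being real). -/
theorem lax_milgram_pairing_monotone
    {V : Type*} [NormedAddCommGroup V] [InnerProductSpace ℂ V] [CompleteSpace V]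
    (B₀ B₁ : V → V → ℂ)
    (hB₀_add : ∀ u v w : V, B₀ (u + v) w = B₀ u w + B₀ v w)
    (hB₀_smul : ∀ (a : ℂ) (u w : V), B₀ (a • u) w = a * B₀ u w)
    (hB₀_herm : ∀ u v : V, B₀ u v = conj (B₀ v u))
    (hB₀_bdd : ∃ C : ℝ, ∀ u v : V, ‖B₀ u v‖ ≤ C * ‖u‖ * ‖v‖)
    (hB₀_coer : ∃ m : ℝ, 0 < m ∧ ∀ u : V, m * ‖u‖ ^ 2 ≤ (B₀ u u).re)
    (hB₁_add : ∀ u v w : V, B₁ (u + v) w = B₁ u w + B₁ v w)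
    (hB₁_smul : ∀ (a : ℂ) (u w : V), B₁ (a • u) w = a * B₁ u w)
    (hB₁_herm : ∀ u v : V, B₁ u v = conj (B₁ v u))
    (hB₁_bdd : ∃ C : ℝ, ∀ u v : V, ‖B₁ u v‖ ≤ C * ‖u‖ * ‖v‖)
    (hB₁_coer : ∃ m : ℝ, 0 < m ∧ ∀ u : V, m * ‖u‖ ^ 2 ≤ (B₁ u u).re)
    (hle : ∀ u : V, (B₁ u u).re ≤ (B₀ u u).re)
    (G₀ G₁ : (V →L⋆[ℂ] ℂ) →L[ℂ] V)
    (hG₀ : ∀ (f : V →L⋆[ℂ] ℂ) (φ : V), B₀ (G₀ f) φ = f φ)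
    (hG₁ : ∀ (f : V →L⋆[ℂ] ℂ) (φ : V), B₁ (G₁ f) φ = f φ) :
    ∀ f : V →L⋆[ℂ] ℂ,
      (f (G₀ f)).im = 0 ∧ (f (G₁ f)).im = 0 ∧ (f (G₀ f)).re ≤ (f (G₁ f)).re :=
  lax_milgram_pairing_monotone_general B₀ B₁ hB₀_herm hB₁_add hB₁_herm hB₁_coer hle G₀ G₁ hG₀ hG₁
end

section
/- Let H be a nonzero complex Hilbert space and G a bounded self-adjoint operator on H which is nonnegative (⟨Gw, w⟩ ≥ 0 for all w) and injective, and whose spectrum satisfies σ(G) ∩ (a, b) = ∅ for some 0 < a < b. Let a < μ̃ < μ < b. Then G − μ·I and G − μ̃·I are invertible, and the operator T := G²((G − μ)⁻¹ − (G − μ̃)⁻¹), which equals (μ − μ̃)·G²(G − μ)⁻¹(G − μ̃)⁻¹, satisfies ⟨Tw, w⟩ > 0 for every w ≠ 0. -/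
open scoped InnerProductSpace Ring

/-!
Everything commutes with the self-adjoint operator `G`, so with `v = ((G - μ')(G - μ))⁻¹ w` the
resolvent identity turns `⟪G²((G - μ)⁻¹ - (G - μ')⁻¹) w, w⟫` into
`(μ - μ') ⟪(G - μ')(G - μ) G v, G v⟫`. The polynomial `(t - μ')(t - μ)` is bounded below by some
`c > 0` off `(a, b)`, hence on `σ(G)`, so `(G - μ')(G - μ) ≥ c` by the functional calculus, and
the inner product is at least `c ‖G v‖² > 0` because `G` is injective.
-/

theorem Ring.inverse_sub_smul_one_sub_inverse_sub_smul_one {R A : Type*} [CommRing R] [Ring A]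
    [Algebra R A] {a : A} {r s : R} (h : IsUnit (a - r • 1) ↔ IsUnit (a - s • 1)) :
    (a - r • 1)⁻¹ʳ - (a - s • 1)⁻¹ʳ = (r - s) • ((a - r • 1)⁻¹ʳ * (a - s • 1)⁻¹ʳ) := by
  rw [Ring.inverse_sub_inverse h, sub_sub_sub_cancel_left, ← sub_smul, mul_smul_comm, mul_one,
    smul_mul_assoc]

theorem isUnit_sub_smul_one_of_notMem_spectrum {R A : Type*} [CommSemiring R] [Ring A]
    [Algebra R A] {a : A} {r : R} (h : r ∉ spectrum R a) : IsUnit (a - r • 1) := by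
  rw [← Algebra.algebraMap_eq_smul_one, ← neg_sub, IsUnit.neg_iff]
  exact spectrum.notMem_iff.mp h

theorem exists_pos_le_sub_mul_sub_of_notMem_Ioo {a b μ ν : ℝ} (hμ : μ ∈ Set.Ioo a b)
    (hν : ν ∈ Set.Ioo a b) : ∃ c > 0, ∀ t ∉ Set.Ioo a b, c ≤ (t - μ) * (t - ν) := by
  obtain ⟨haμ, hμb⟩ := hμ
  obtain ⟨haν, hνb⟩ := hν
  refine ⟨min ((μ - a) * (ν - a)) ((b - μ) * (b - ν)), lt_min (by nlinarith) (by nlinarith),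
    fun t ht => ?_⟩
  rcases le_or_gt t a with hta | hat
  · nlinarith [min_le_left ((μ - a) * (ν - a)) ((b - μ) * (b - ν))]
  · have hbt : b ≤ t := not_lt.mp fun htb => ht ⟨hat, htb⟩
    nlinarith [min_le_right ((μ - a) * (ν - a)) ((b - μ) * (b - ν))]

theorem IsSelfAdjoint.algebraMap_le_sub_smul_one_mul_sub_smul_one {A : Type*} [CStarAlgebra A]
    [PartialOrder A] [StarOrderedRing A] {a : A} (ha : IsSelfAdjoint a) {c μ ν : ℝ}
    (h : ∀ t ∈ spectrum ℝ a, c ≤ (t - μ) * (t - ν)) :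
    algebraMap ℝ A c ≤ (a - μ • 1) * (a - ν • 1) := by
  have hcfc : cfc (fun t : ℝ => (t - μ) * (t - ν)) a = (a - μ • 1) * (a - ν • 1) := by
    rw [cfc_mul .., cfc_sub .., cfc_sub .., cfc_id' .., cfc_const .., cfc_const ..,
      Algebra.algebraMap_eq_smul_one, Algebra.algebraMap_eq_smul_one]
  exact hcfc ▸ algebraMap_le_cfc _ c a h

namespace ContinuousLinearMap

variable {𝕜 E : Type*} [RCLike 𝕜] [NormedAddCommGroup E] [InnerProductSpace 𝕜 E]

theorem mul_norm_sq_le_re_inner_of_algebraMap_le [Algebra ℝ (E →L[𝕜] E)]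
    [IsScalarTower ℝ 𝕜 (E →L[𝕜] E)] {S : E →L[𝕜] E} {c : ℝ}
    (h : algebraMap ℝ (E →L[𝕜] E) c ≤ S) (x : E) : c * ‖x‖ ^ 2 ≤ RCLike.re ⟪S x, x⟫_𝕜 := by
  have := ((le_def _ _).mp h).re_inner_nonneg_left x
  rw [sub_apply, inner_sub_left, map_sub, Algebra.algebraMap_eq_smul_one,
    ← algebraMap_smul 𝕜 c (1 : E →L[𝕜] E), smul_apply, one_apply_eq_self, inner_smul_left,
    RCLike.algebraMap_eq_ofReal, RCLike.conj_ofReal, RCLike.re_ofReal_mul,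
    inner_self_eq_norm_sq] at this
  linarith

theorem re_inner_sq_mul_inverse_pos [CompleteSpace E] {G S : E →L[𝕜] E} (hG : IsSelfAdjoint G)
    (hinj : Function.Injective G) (hS : IsUnit S) (hGS : Commute G S) {c : ℝ} (hc : 0 < c)
    (hcS : ∀ x, c * ‖x‖ ^ 2 ≤ RCLike.re ⟪S x, x⟫_𝕜) {w : E} (hw : w ≠ 0) :
    0 < RCLike.re ⟪(G ^ 2 * S⁻¹ʳ) w, w⟫_𝕜 := by
  set v := S⁻¹ʳ w
  have hw_eq : w = S v := by
    rw [← mul_apply_eq_comp, Ring.mul_inverse_cancel _ hS, one_apply_eq_self]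
  have hGv : G v ≠ 0 := fun h => hw (by rw [hw_eq, hinj (h.trans (map_zero G).symm), map_zero])
  have key : RCLike.re ⟪(G ^ 2 * S⁻¹ʳ) w, w⟫_𝕜 = RCLike.re ⟪S (G v), G v⟫_𝕜 := by
    calc RCLike.re ⟪(G ^ 2 * S⁻¹ʳ) w, w⟫_𝕜 = RCLike.re ⟪G (G v), S v⟫_𝕜 := by
          rw [← hw_eq, pow_two]; rfl
      _ = RCLike.re ⟪G v, S (G v)⟫_𝕜 := by
          rw [← mul_apply_eq_comp S G, ← hGS.eq, mul_apply_eq_comp]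
          exact congrArg RCLike.re (hG.isSymmetric _ _)
      _ = RCLike.re ⟪S (G v), G v⟫_𝕜 := inner_re_symm _ _
  rw [key]
  exact (mul_pos hc (pow_pos (norm_pos_iff.mpr hGv) 2)).trans_le (hcS _)

end ContinuousLinearMap

theorem resolvent_difference_positive_general
    {H : Type*} [NormedAddCommGroup H] [InnerProductSpace ℂ H] [CompleteSpace H]
    (G : H →L[ℂ] H) (hsa : IsSelfAdjoint G)
    (hinj : Function.Injective ⇑G)
    (a b : ℝ)
    (hgap : ∀ x : ℝ, x ∈ Set.Ioo a b → (x : ℂ) ∉ spectrum ℂ G)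
    (μ μ' : ℝ) (hμ'₁ : a < μ') (hμ'₂ : μ' < μ) (hμ : μ < b) :
    IsUnit (G - (μ : ℂ) • (1 : H →L[ℂ] H)) ∧
    IsUnit (G - (μ' : ℂ) • (1 : H →L[ℂ] H)) ∧
    G ^ 2 * (Ring.inverse (G - (μ : ℂ) • 1) - Ring.inverse (G - (μ' : ℂ) • 1)) =
      ((μ : ℂ) - (μ' : ℂ)) •
        (G ^ 2 * Ring.inverse (G - (μ : ℂ) • 1) * Ring.inverse (G - (μ' : ℂ) • 1)) ∧
    ∀ w : H, w ≠ 0 →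
      0 < (⟪(G ^ 2 *
        (Ring.inverse (G - (μ : ℂ) • 1) - Ring.inverse (G - (μ' : ℂ) • 1))) w, w⟫_ℂ).re := by
  have hμ_mem : μ ∈ Set.Ioo a b := ⟨hμ'₁.trans hμ'₂, hμ⟩
  have hμ'_mem : μ' ∈ Set.Ioo a b := ⟨hμ'₁, hμ'₂.trans hμ⟩
  have hA := isUnit_sub_smul_one_of_notMem_spectrum (hgap μ hμ_mem)
  have hB := isUnit_sub_smul_one_of_notMem_spectrum (hgap μ' hμ'_mem)
  have hres : G ^ 2 * ((G - (μ : ℂ) • 1)⁻¹ʳ - (G - (μ' : ℂ) • 1)⁻¹ʳ) =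
      ((μ : ℂ) - (μ' : ℂ)) • (G ^ 2 * (G - (μ : ℂ) • 1)⁻¹ʳ * (G - (μ' : ℂ) • 1)⁻¹ʳ) := by
    rw [Ring.inverse_sub_smul_one_sub_inverse_sub_smul_one (iff_of_true hA hB), mul_smul_comm,
      mul_assoc]
  refine ⟨hA, hB, hres, fun w hw => ?_⟩
  obtain ⟨c, hc, hc_le⟩ := exists_pos_le_sub_mul_sub_of_notMem_Ioo hμ'_mem hμ_mem
  have hc_spec : ∀ t ∈ spectrum ℝ G, c ≤ (t - μ') * (t - μ) := fun t ht =>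
    hc_le t fun ht_gap => hgap t ht_gap (spectrum.algebraMap_mem ℂ ht)
  have hc_BA : algebraMap ℝ _ c ≤ (G - (μ' : ℂ) • 1) * (G - (μ : ℂ) • 1) := by
    simpa only [Complex.coe_smul] using hsa.algebraMap_le_sub_smul_one_mul_sub_smul_one hc_spec
  have hG_comm : ∀ r : ℂ, Commute G (G - r • 1) := fun r =>
    (Commute.refl G).sub_right ((Commute.one_right G).smul_right r)
  have hBA_comm : Commute (G - (μ' : ℂ) • 1) (G - (μ : ℂ) • 1) :=
    (hG_comm μ).sub_left ((Commute.one_left _).smul_left _)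
  have hpos := ContinuousLinearMap.re_inner_sq_mul_inverse_pos hsa hinj (hB.mul hA)
    ((hG_comm μ').mul_right (hG_comm μ)) hc
    (ContinuousLinearMap.mul_norm_sq_le_re_inner_of_algebraMap_le hc_BA) hw
  rw [Ring.mul_inverse_rev' hBA_comm, ← mul_assoc] at hpos
  rw [hres, smul_apply, inner_smul_left, ← Complex.ofReal_sub,
    Complex.conj_ofReal, Complex.re_ofReal_mul]
  exact mul_pos (sub_pos.mpr hμ'₂) hpos

/-- Operator-theoretic core of the monotonicity part of Lemma 12: for a nonnegative,
injective, bounded self-adjoint operator `G` whose spectrum avoids `(a,b)` with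
`0 < a < b`, and `a < μ̃ < μ < b`, the operators `G − μ` and `G − μ̃` are invertible and
`T = G²((G−μ)⁻¹ − (G−μ̃)⁻¹) = (μ−μ̃)G²(G−μ)⁻¹(G−μ̃)⁻¹` satisfies `⟨Tw,w⟩ > 0` for `w ≠ 0`. -/
theorem resolvent_difference_positive
    {H : Type*} [NormedAddCommGroup H] [InnerProductSpace ℂ H] [CompleteSpace H]
    [Nontrivial H]
    (G : H →L[ℂ] H) (hsa : IsSelfAdjoint G)
    (hpos : ∀ w : H, 0 ≤ (⟪G w, w⟫_ℂ).re)
    (hinj : Function.Injective ⇑G)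
    (a b : ℝ) (ha : 0 < a) (hab : a < b)
    (hgap : ∀ x : ℝ, x ∈ Set.Ioo a b → (x : ℂ) ∉ spectrum ℂ G)
    (μ μ' : ℝ) (hμ'₁ : a < μ') (hμ'₂ : μ' < μ) (hμ : μ < b) :
    IsUnit (G - (μ : ℂ) • (1 : H →L[ℂ] H)) ∧
    IsUnit (G - (μ' : ℂ) • (1 : H →L[ℂ] H)) ∧
    G ^ 2 * (Ring.inverse (G - (μ : ℂ) • 1) - Ring.inverse (G - (μ' : ℂ) • 1)) =
      ((μ : ℂ) - (μ' : ℂ)) •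
        (G ^ 2 * Ring.inverse (G - (μ : ℂ) • 1) * Ring.inverse (G - (μ' : ℂ) • 1)) ∧
    ∀ w : H, w ≠ 0 →
      0 < (⟪(G ^ 2 *
        (Ring.inverse (G - (μ : ℂ) • 1) - Ring.inverse (G - (μ' : ℂ) • 1))) w, w⟫_ℂ).re :=
  resolvent_difference_positive_general G hsa hinj a b hgap μ μ' hμ'₁ hμ'₂ hμ
end

section
/- Let H be a nonzero complex Hilbert space and G a bounded self-adjoint operator on H which is nonnegative (⟨Gw, w⟩ ≥ 0 for all w) and whose spectrum satisfies σ(G) ∩ (a, b) = ∅ for some 0 < a < b. Let μ ∈ (a, b). Then G − μ·I is invertible and for all w ∈ H: ⟨G²(G − μ)⁻¹ w, w⟩ ≥ (a/(a − μ)) · ⟨Gw, w⟩. (Note that a/(a − μ) < 0.) -/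
open scoped InnerProductSpace

/-! By the continuous functional calculus the operator inequality reduces to the scalar one
`a/(a-μ) · x ≤ x²/(x-μ)` on `σ(G) ⊆ [0, a] ∪ [b, ∞)`. For `x ≥ b > μ` the left side is `≤ 0` and
the right side `≥ 0`; for `0 ≤ x ≤ a` the difference equals `xμ(a-x)/((x-μ)(a-μ)) ≥ 0`. -/

lemma div_sub_mul_le_sq_div_sub {α μ x : ℝ} (hα : 0 < α) (hαμ : α < μ) (hx : 0 ≤ x)
    (hgap : x ≤ α ∨ μ < x) : α / (α - μ) * x ≤ x ^ 2 / (x - μ) := by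
  rcases hgap with hxα | hμx
  · have hxμ : x - μ < 0 := by linarith
    have hαμ' : α - μ < 0 := by linarith
    have hdiff : x ^ 2 / (x - μ) - α / (α - μ) * x = x * μ * (α - x) / ((x - μ) * (α - μ)) := by
      field_simp [hxμ.ne, hαμ'.ne]
      ring
    have hnum : 0 ≤ x * μ * (α - x) :=
      mul_nonneg (mul_nonneg hx (hα.trans hαμ).le) (sub_nonneg.mpr hxα)
    have hden : 0 < (x - μ) * (α - μ) := mul_pos_of_neg_of_neg hxμ hαμ'
    linarith [div_nonneg hnum hden.le]
  · calc α / (α - μ) * x ≤ 0 :=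
          mul_nonpos_of_nonpos_of_nonneg (div_nonpos_of_nonneg_of_nonpos hα.le (by linarith)) hx
      _ ≤ x ^ 2 / (x - μ) := div_nonneg (sq_nonneg x) (by linarith)

section FunctionalCalculus

variable {A : Type*} [Ring A] [StarRing A] [TopologicalSpace A] [Algebra ℝ A]
  [ContinuousFunctionalCalculus ℝ A IsSelfAdjoint]

lemma cfc_sub_const {a : A} (μ : ℝ) (ha : IsSelfAdjoint a) :
    cfc (fun x : ℝ => x - μ) a = a - algebraMap ℝ A μ := by
  rw [cfc_sub (fun x : ℝ => x) (fun _ => μ) a, cfc_id' ℝ a, cfc_const μ a]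

lemma cfc_sq_div_sub_const {a : A} {μ : ℝ} (hμ : μ ∉ spectrum ℝ a) (ha : IsSelfAdjoint a) :
    cfc (fun x : ℝ => x ^ 2 / (x - μ)) a = a ^ 2 * Ring.inverse (a - algebraMap ℝ A μ) := by
  rw [cfc_map_div (· ^ 2) (· - μ) a fun x hx => sub_ne_zero.mpr (ne_of_mem_of_not_mem hx hμ),
    cfc_pow_id a 2, cfc_sub_const μ ha]

variable [PartialOrder A] [StarOrderedRing A] [NonnegSpectrumClass ℝ A]

lemma smul_le_sq_mul_inverse_sub {a : A} {α μ : ℝ} (hα : 0 < α) (hαμ : α < μ) (ha : 0 ≤ a)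
    (hgap : ∀ x ∈ spectrum ℝ a, x ≤ α ∨ μ < x) :
    (α / (α - μ)) • a ≤ a ^ 2 * Ring.inverse (a - algebraMap ℝ A μ) := by
  have hsa : IsSelfAdjoint a := IsSelfAdjoint.of_nonneg ha
  have hμ : μ ∉ spectrum ℝ a := fun h => by simpa [hαμ.not_ge] using hgap μ h
  rw [← cfc_sq_div_sub_const hμ hsa, ← cfc_const_mul_id _ a hsa]
  exact cfc_mono (fun x hx => div_sub_mul_le_sq_div_sub hα hαμ
    (spectrum_nonneg_of_nonneg ha hx) (hgap x hx))
    (hg := (continuousOn_pow 2).div (continuousOn_id.sub continuousOn_const)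
      fun x hx => sub_ne_zero.mpr (ne_of_mem_of_not_mem hx hμ))

end FunctionalCalculus

namespace ContinuousLinearMap

variable {𝕜 E : Type*} [RCLike 𝕜] [NormedAddCommGroup E] [InnerProductSpace 𝕜 E]

lemma re_inner_apply_le_of_le {f g : E →L[𝕜] E} (h : f ≤ g) (w : E) :
    RCLike.re ⟪f w, w⟫_𝕜 ≤ RCLike.re ⟪g w, w⟫_𝕜 := by
  have := ((le_def f g).mp h).re_inner_nonneg_left w
  simpa [inner_sub_left] using this

variable {H : Type*} [NormedAddCommGroup H] [InnerProductSpace ℂ H]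

lemma re_inner_real_smul_apply (r : ℝ) (f : H →L[ℂ] H) (w : H) :
    (⟪(r • f) w, w⟫_ℂ).re = r * (⟪f w, w⟫_ℂ).re := by
  rw [smul_apply, ← Complex.coe_smul, inner_smul_left, Complex.conj_ofReal, Complex.re_ofReal_mul]

lemma algebraMap_real_eq_ofReal_smul_one (μ : ℝ) :
    algebraMap ℝ (H →L[ℂ] H) μ = (μ : ℂ) • 1 := by
  rw [Algebra.algebraMap_eq_smul_one, Complex.coe_smul]

end ContinuousLinearMap

open ContinuousLinearMap in
theorem resolvent_quadratic_form_lower_bound_general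
    {H : Type*} [NormedAddCommGroup H] [InnerProductSpace ℂ H] [CompleteSpace H]
    (G : H →L[ℂ] H) (hsa : IsSelfAdjoint G)
    (hpos : ∀ w : H, 0 ≤ (⟪G w, w⟫_ℂ).re)
    (a b : ℝ) (ha : 0 < a)
    (hgap : ∀ x : ℝ, x ∈ Set.Ioo a b → (x : ℂ) ∉ spectrum ℂ G)
    (μ : ℝ) (hμ : μ ∈ Set.Ioo a b) :
    IsUnit (G - (μ : ℂ) • (1 : H →L[ℂ] H)) ∧
    ∀ w : H,
      (a / (a - μ)) * (⟪G w, w⟫_ℂ).re ≤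
        (⟪(G ^ 2 * Ring.inverse (G - (μ : ℂ) • 1)) w, w⟫_ℂ).re := by
  obtain ⟨haμ, hμb⟩ := hμ
  have hG : 0 ≤ G := (nonneg_iff_isPositive G).mpr ⟨hsa.isSymmetric, hpos⟩
  have hspec : ∀ x ∈ spectrum ℝ G, x ≤ a ∨ μ < x := fun x hx => by
    by_contra! h
    exact hgap x ⟨h.1, h.2.trans_lt hμb⟩ (spectrum.algebraMap_mem ℂ hx)
  have hμG : μ ∉ spectrum ℝ G := fun h => by simpa [haμ.not_ge] using hspec μ h
  rw [← algebraMap_real_eq_ofReal_smul_one]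
  refine ⟨by simpa using (spectrum.notMem_iff.mp hμG).neg, fun w => ?_⟩
  simpa only [re_inner_real_smul_apply, RCLike.re_to_complex] using
    re_inner_apply_le_of_le (smul_le_sq_mul_inverse_sub ha haμ hG hspec) w

/-- Spectral content of Lemma 13: for a nonnegative bounded self-adjoint operator `G`
whose spectrum avoids `(a,b)` with `0 < a < b`, and `μ ∈ (a,b)`, the operator `G − μ`
is invertible and `⟨G²(G−μ)⁻¹w, w⟩ ≥ (a/(a−μ))⟨Gw, w⟩` for all `w`. -/
theorem resolvent_quadratic_form_lower_bound
    {H : Type*} [NormedAddCommGroup H] [InnerProductSpace ℂ H] [CompleteSpace H]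
    [Nontrivial H]
    (G : H →L[ℂ] H) (hsa : IsSelfAdjoint G)
    (hpos : ∀ w : H, 0 ≤ (⟪G w, w⟫_ℂ).re)
    (a b : ℝ) (ha : 0 < a) (hab : a < b)
    (hgap : ∀ x : ℝ, x ∈ Set.Ioo a b → (x : ℂ) ∉ spectrum ℂ G)
    (μ : ℝ) (hμ : μ ∈ Set.Ioo a b) :
    IsUnit (G - (μ : ℂ) • (1 : H →L[ℂ] H)) ∧
    ∀ w : H,
      (a / (a - μ)) * (⟪G w, w⟫_ℂ).re ≤
        (⟪(G ^ 2 * Ring.inverse (G - (μ : ℂ) • 1)) w, w⟫_ℂ).re :=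
  resolvent_quadratic_form_lower_bound_general G hsa hpos a b ha hgap μ hμ
end
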